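/- If a configuration x on nodes 0..N is legitimate and node 0 fires (x[0] = x[N], i.e., j = N+1 or j = 0 in the legitimate form, so all nodes equal a - requiring the configuration to be constant), then after the step the new configuration is legitimate with j = 1; conversely if 1 ≤ j ≤ N and node j fires, the result is legitimate with parameter j+1. -/

import Mathlib

/-- Predecessor node on the ring (anti-clockwise neighbour); node 0's neighbour is handled separately. -/
def ringPred (N : ℕ) (i : Fin (N + 1)) : Fin (N + 1) :=
  ⟨i.val - 1, Nat.lt_of_le_of_lt (Nat.sub_le _ _) i.isLt⟩

/-- Node `i` is privileged in configuration `x`. -/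
def Privileged (N K : ℕ) (x : Fin (N + 1) → ZMod K) (i : Fin (N + 1)) : Prop :=
  (i.val = 0 ∧ x 0 = x (Fin.last N)) ∨ (0 < i.val ∧ x i ≠ x (ringPred N i))

/-- The value node `i` writes when it fires. -/
def fireVal (N K : ℕ) (x : Fin (N + 1) → ZMod K) (i : Fin (N + 1)) : ZMod K :=
  if i.val = 0 then x 0 + 1 else x (ringPred N i)

/-- One step of Dijkstra's protocol: a single privileged node fires. -/
def Step (N K : ℕ) (x x' : Fin (N + 1) → ZMod K) : Prop :=
  ∃ i : Fin (N + 1), Privileged N K x i ∧ x' = Function.update x i (fireVal N K x i)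

/-- An execution: each configuration is obtained from the previous by one step. -/
def Execution (N K : ℕ) (x : ℕ → Fin (N + 1) → ZMod K) : Prop :=
  ∀ t : ℕ, Step N K (x t) (x (t + 1))

/-- Node `i` fires at time `t` in execution `x`. -/
def Fires (N K : ℕ) (x : ℕ → Fin (N + 1) → ZMod K) (i : Fin (N + 1)) (t : ℕ) : Prop :=
  Privileged N K (x t) i ∧ x (t + 1) = Function.update (x t) i (fireVal N K (x t) i)

/-- Fairness: every continuously privileged node eventually fires. -/
def Fair (N K : ℕ) (x : ℕ → Fin (N + 1) → ZMod K) : Prop :=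
  ∀ (i : Fin (N + 1)) (t : ℕ), (∀ s, t ≤ s → Privileged N K (x s) i) → ∃ s, t ≤ s ∧ Fires N K x i s

/-- Legitimate configuration with explicit parameters `(a, j)`. -/
def LegitimateP (N K : ℕ) (a : ZMod K) (j : ℕ) (x : Fin (N + 1) → ZMod K) : Prop :=
  j ≤ N + 1 ∧ (∀ i : Fin (N + 1), i.val < j → x i = a) ∧
    (∀ i : Fin (N + 1), j ≤ i.val → x i = a - 1)

/-- Legitimate configuration. -/
def Legitimate (N K : ℕ) (x : Fin (N + 1) → ZMod K) : Prop :=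
  ∃ (a : ZMod K) (j : ℕ), LegitimateP N K a j x

@[simp]
theorem ringPred_val {N : ℕ} (i : Fin (N + 1)) : (ringPred N i).val = i.val - 1 := rfl

section Configuration

variable {N K : ℕ} {x : Fin (N + 1) → ZMod K}

theorem privileged_iff_eq_zero_of_forall_eq (hx : ∀ i, x i = x 0) {i : Fin (N + 1)} :
    Privileged N K x i ↔ i = 0 := by
  constructor
  · rintro (⟨hi, -⟩ | ⟨-, hne⟩)
    · exact Fin.ext hi
    · exact absurd ((hx i).trans (hx _).symm) hne
  · rintro rfl
    exact Or.inl ⟨rfl, (hx _).symm⟩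

theorem legitimateP_one_update_zero (hx : ∀ i, x i = x 0) :
    LegitimateP N K (x 0 + 1) 1 (Function.update x 0 (x 0 + 1)) := by
  refine ⟨by omega, fun i hi => ?_, fun i hi => ?_⟩
  · obtain rfl : i = 0 := Fin.ext (Nat.lt_one_iff.mp hi)
    exact Function.update_self ..
  · have hi0 : i ≠ 0 := by rintro rfl; exact absurd hi (by simp)
    rw [Function.update_of_ne hi0, hx i, add_sub_cancel_right]

end Configuration

namespace LegitimateP

variable {N K : ℕ} {a : ZMod K} {j : ℕ} {x : Fin (N + 1) → ZMod K}

theorem apply_eq_apply_zero (h : LegitimateP N K a j x) (hj : j = 0 ∨ j = N + 1)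
    (i : Fin (N + 1)) : x i = x 0 := by
  obtain ⟨-, hlt, hge⟩ := h
  rcases hj with rfl | rfl
  · rw [hge i i.val.zero_le, hge 0 le_rfl]
  · rw [hlt i i.isLt, hlt 0 N.succ_pos]

theorem apply_eq_apply_ringPred (h : LegitimateP N K a j x) {i : Fin (N + 1)} (hi : 0 < i.val)
    (hij : i.val ≠ j) : x i = x (ringPred N i) := by
  obtain ⟨-, hlt, hge⟩ := h
  rcases Nat.lt_or_gt_of_ne hij with hij | hij
  · rw [hlt i hij, hlt _ (by simp only [ringPred_val]; omega)]
  · rw [hge i hij.le, hge _ (by simp only [ringPred_val]; omega)]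

section Interior

variable (h : LegitimateP N K a j x) (hj : 1 ≤ j) (hjN : j ≤ N)
include h hj hjN

theorem apply_ringPred_at_boundary :
    x (ringPred N ⟨j, Nat.lt_succ_of_le hjN⟩) = a :=
  h.2.1 _ (by simp only [ringPred_val]; omega)

theorem privileged_iff [Nontrivial (ZMod K)] {i : Fin (N + 1)} :
    Privileged N K x i ↔ i.val = j := by
  have hne : a ≠ a - 1 := fun e => one_ne_zero (sub_eq_self.mp e.symm)
  constructor
  · rintro (⟨-, h0⟩ | ⟨hi, hne'⟩)
    · rw [h.2.1 0 (by simp only [Fin.val_zero]; omega), h.2.2 _ (by simpa using hjN)] at h0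
      exact absurd h0 hne
    · by_contra hij
      exact hne' (h.apply_eq_apply_ringPred hi hij)
  · intro hij
    obtain rfl : i = ⟨j, Nat.lt_succ_of_le hjN⟩ := Fin.ext hij
    refine Or.inr ⟨hj, ?_⟩
    rw [h.2.2 _ le_rfl, h.apply_ringPred_at_boundary hj hjN]
    exact hne.symm

theorem update_succ :
    LegitimateP N K a (j + 1)
      (Function.update x ⟨j, Nat.lt_succ_of_le hjN⟩ (x (ringPred N ⟨j, Nat.lt_succ_of_le hjN⟩))) := by
  refine ⟨by omega, fun i hi => ?_, fun i hi => ?_⟩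
  · rcases (Nat.lt_succ_iff_lt_or_eq.mp hi) with hij | hij
    · rw [Function.update_of_ne (Fin.ne_of_val_ne hij.ne)]
      exact h.2.1 i hij
    · rw [show i = ⟨j, Nat.lt_succ_of_le hjN⟩ from Fin.ext hij, Function.update_self]
      exact h.apply_ringPred_at_boundary hj hjN
  · rw [Function.update_of_ne (Fin.ne_of_val_ne (show i.val ≠ j by omega))]
    exact h.2.2 i (by omega)

end Interior

end LegitimateP

theorem legitimate_step_parameters_general (N K : ℕ) (hK : 2 ≤ K)
    (a : ZMod K) (j : ℕ) (x : Fin (N + 1) → ZMod K) (h : LegitimateP N K a j x) :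
    ((j = 0 ∨ j = N + 1) →
      (∀ i : Fin (N + 1), Privileged N K x i ↔ i = 0) ∧
      ∃ a' : ZMod K, LegitimateP N K a' 1 (Function.update x 0 (x 0 + 1))) ∧
    (∀ (_ : 1 ≤ j) (hjN : j ≤ N),
      (∀ i : Fin (N + 1), Privileged N K x i ↔ i = ⟨j, Nat.lt_succ_of_le hjN⟩) ∧
      LegitimateP N K a (j + 1)
        (Function.update x ⟨j, Nat.lt_succ_of_le hjN⟩
          (x (ringPred N ⟨j, Nat.lt_succ_of_le hjN⟩)))) := by
  have : Fact (1 < K) := ⟨hK⟩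
  refine ⟨fun hj => ?_, fun hj hjN => ⟨fun i => ?_, h.update_succ hj hjN⟩⟩
  · have hx := h.apply_eq_apply_zero hj
    exact ⟨fun i => privileged_iff_eq_zero_of_forall_eq hx, _, legitimateP_one_update_zero hx⟩
  · rw [h.privileged_iff hj hjN, Fin.ext_iff]

/-- Firing in a legitimate configuration with parameters (a, j): if the configuration is
constant (j = 0 or j = N+1), node 0 is uniquely privileged and firing yields parameter j = 1;
if 1 ≤ j ≤ N, node j is uniquely privileged and firing yields parameters (a, j+1). -/
theorem legitimate_step_parameters (N K : ℕ) (hN : 1 ≤ N) (hK : 2 ≤ K)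
    (a : ZMod K) (j : ℕ) (x : Fin (N + 1) → ZMod K) (h : LegitimateP N K a j x) :
    ((j = 0 ∨ j = N + 1) →
      (∀ i : Fin (N + 1), Privileged N K x i ↔ i = 0) ∧
      ∃ a' : ZMod K, LegitimateP N K a' 1 (Function.update x 0 (x 0 + 1))) ∧
    (∀ (_ : 1 ≤ j) (hjN : j ≤ N),
      (∀ i : Fin (N + 1), Privileged N K x i ↔ i = ⟨j, Nat.lt_succ_of_le hjN⟩) ∧
      LegitimateP N K a (j + 1)
        (Function.update x ⟨j, Nat.lt_succ_of_le hjN⟩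
          (x (ringPred N ⟨j, Nat.lt_succ_of_le hjN⟩)))) :=
  legitimate_step_parameters_general N K hK a j x h
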